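/- Let A be an associative k-algebra and a_1, …, a_m ∈ A. If dim_k P_{≥1}(a_1,…,a_m) < ∞, then the subspace k a_1 + … + k a_m is algebraic of bounded degree, i.e., there exists d ≥ 1 such that every element of k a_1 + … + k a_m is algebraic of degree at most d. -/

import Mathlib

/-- `pWord a i` is the polynomial `p_{i_1,…,i_m}(a_1,…,a_m)`: the sum, over all distinct
words in `m` letters containing exactly `i_j` occurrences of letter `j` for each `j`,
of the corresponding products of `a_1,…,a_m`. -/
noncomputable def pWord {A : Type*} [Ring A] {m : ℕ} (a : Fin m → A) (i : Fin m → ℕ) : A :=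
  ∑ w ∈ (Finset.univ : Finset (Fin (∑ j, i j) → Fin m)).filter
      (fun w => ∀ j, (List.ofFn w).count j = i j),
    ((List.ofFn w).map a).prod

/-- `Pdeg k a n` is `P_n(a_1,…,a_m)`, the `k`-span of
`{p_{i_1,…,i_m}(a_1,…,a_m) : i_1+…+i_m = n}`. -/
noncomputable def Pdeg (k : Type*) [Field k] {A : Type*} [Ring A] [Algebra k A]
    {m : ℕ} (a : Fin m → A) (n : ℕ) : Submodule k A :=
  Submodule.span k {x | ∃ i : Fin m → ℕ, (∑ j, i j) = n ∧ x = pWord a i}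

/-! Expanding `(∑ c_j a_j)^n` word by word and grouping the words by their letter counts writes it
as `∑_i (∏ c_j^{i_j}) p_i(a)`, so it lies in `P_n`. Hence all positive powers of
`u ∈ k a_1 + … + k a_m` lie in `P_{≥1}`, of dimension `D`. The spans `W_n` of `u, …, u^n` form an
increasing chain in `P_{≥1}`, so `W_{n+1} = W_n` for some `n ≤ D`. Then `u^{n+1} ∈ W_n`, which
makes `W_n` stable under right multiplication by `u`, whence `u^{D+1} ∈ W_n ⊆ W_D`. -/

open Module Submodule

theorem pow_sum_eq_sum_prod_ofFn {ι R : Type*} [Fintype ι] [Semiring R] (f : ι → R) (n : ℕ) :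
    (∑ i, f i) ^ n = ∑ w : Fin n → ι, ((List.ofFn w).map f).prod := by
  induction n with
  | zero => simp
  | succ n ih =>
    rw [pow_succ', ih, Finset.sum_mul_sum, ← (Fin.consEquiv fun _ => ι).sum_comp,
      Fintype.sum_prod_type]
    simp [List.ofFn_succ]

theorem List.prod_map_smul_eq_smul_prod_map {ι R A : Type*} [CommSemiring R] [Semiring A]
    [Algebra R A] (c : ι → R) (a : ι → A) (l : List ι) :
    (l.map fun i => c i • a i).prod = (l.map c).prod • (l.map a).prod := by
  induction l with
  | nil => simp
  | cons i l ih => simp only [List.map_cons, List.prod_cons, ih, smul_mul_smul_comm]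

theorem List.prod_map_eq_prod_pow_count {ι M : Type*} [Fintype ι] [DecidableEq ι] [CommMonoid M]
    (c : ι → M) (l : List ι) : (l.map c).prod = ∏ i, c i ^ l.count i := by
  rw [Finset.prod_list_map_count]
  exact Finset.prod_subset (Finset.subset_univ _) fun i _ hi => by
    rw [List.count_eq_zero_of_not_mem (mt List.mem_toFinset.2 hi), pow_zero]

theorem List.sum_count_ofFn {ι : Type*} [Fintype ι] [DecidableEq ι] {n : ℕ} (w : Fin n → ι) :
    ∑ i, (List.ofFn w).count i = n := by
  simpa using Multiset.sum_count_eq_card (s := Finset.univ) (m := (List.ofFn w : Multiset ι))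
    (by simp)

section Pdeg

variable {k : Type*} [Field k] {A : Type*} [Ring A] [Algebra k A] {m : ℕ}

theorem pWord_eq_sum_filter (a : Fin m → A) {i : Fin m → ℕ} {n : ℕ} (hi : ∑ j, i j = n) :
    pWord a i = ∑ w : Fin n → Fin m with (fun j => (List.ofFn w).count j) = i,
      ((List.ofFn w).map a).prod := by
  subst hi
  simp [pWord, funext_iff]

theorem pow_sum_smul_mem_Pdeg (c : Fin m → k) (a : Fin m → A) (n : ℕ) :
    (∑ j, c j • a j) ^ n ∈ Pdeg k a n := by
  set count : (Fin n → Fin m) → Fin m → ℕ := fun w j => (List.ofFn w).count j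
  rw [pow_sum_eq_sum_prod_ofFn, ← Finset.sum_fiberwise_of_maps_to (g := count)
    (t := Finset.univ.image count) fun w _ => Finset.mem_image_of_mem _ (Finset.mem_univ w)]
  refine sum_mem fun i hi => ?_
  obtain ⟨w₀, -, rfl⟩ := Finset.mem_image.1 hi
  have hsum : ∑ j, count w₀ j = n := List.sum_count_ofFn w₀
  have hfiber : ∑ w with count w = count w₀, ((List.ofFn w).map fun j => c j • a j).prod =
      (∏ j, c j ^ count w₀ j) • pWord a (count w₀) := by
    rw [pWord_eq_sum_filter a hsum, Finset.smul_sum]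
    refine Finset.sum_congr rfl fun w hw => ?_
    rw [List.prod_map_smul_eq_smul_prod_map, List.prod_map_eq_prod_pow_count,
      ← (Finset.mem_filter.1 hw).2]
  rw [hfiber]
  exact smul_mem _ _ (subset_span ⟨_, hsum, rfl⟩)

end Pdeg

theorem Submodule.exists_succ_le_of_monotone {K V : Type*} [DivisionRing K] [AddCommGroup V]
    [Module K V] {U : Submodule K V} [FiniteDimensional K U] {W : ℕ → Submodule K V} (hW : Monotone W)
    (hWU : ∀ n, W n ≤ U) : ∃ n ≤ finrank K U, W (n + 1) ≤ W n := by
  by_contra! hstrict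
  have hfd (n : ℕ) : FiniteDimensional K (W n) := finiteDimensional_of_le (hWU n)
  have hgrow (n : ℕ) (hn : n ≤ finrank K U + 1) : n ≤ finrank K (W n) := by
    induction n with
    | zero => exact Nat.zero_le _
    | succ n ih =>
      have hlt : W n < W (n + 1) := lt_of_le_not_ge (hW n.le_succ) (hstrict n (by omega))
      have := finrank_lt_finrank_of_lt hlt
      have := ih (by omega)
      omega
  have := finrank_mono (hWU (finrank K U + 1))
  have := hgrow (finrank K U + 1) le_rfl
  omega

theorem pow_mem_span_pow_Icc_of_pow_succ_mem {R A : Type*} [CommSemiring R] [Semiring A]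
    [Algebra R A] {u : A} {n : ℕ}
    (h : u ^ (n + 1) ∈ span R ((u ^ ·) '' Set.Icc 1 n)) {t : ℕ} (ht : 1 ≤ t) :
    u ^ t ∈ span R ((u ^ ·) '' Set.Icc 1 n) := by
  set W := span R ((u ^ ·) '' Set.Icc 1 n)
  have hmul (x : A) (hx : x ∈ W) : x * u ∈ W := by
    refine (map_span_le (LinearMap.mulRight R u) _ _).2 ?_ (mem_map_of_mem hx)
    rintro _ ⟨i, ⟨-, hin⟩, rfl⟩
    rw [LinearMap.mulRight_apply, ← pow_succ]
    rcases hin.eq_or_lt with rfl | hin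
    · exact h
    · exact subset_span ⟨i + 1, ⟨le_add_self, hin⟩, rfl⟩
  rcases le_or_gt t n with htn | hnt
  · exact subset_span ⟨t, ⟨ht, htn⟩, rfl⟩
  · induction t, hnt using Nat.le_induction with
    | base => exact h
    | succ t _ ih => rw [pow_succ]; exact hmul _ (ih (by omega))

theorem pow_finrank_succ_mem_span_pow_Icc {K A : Type*} [Field K] [Ring A] [Algebra K A]
    {U : Submodule K A} [FiniteDimensional K U] {u : A} (hu : ∀ n, 1 ≤ n → u ^ n ∈ U) :
    u ^ (finrank K U + 1) ∈ span K ((u ^ ·) '' Set.Icc 1 (finrank K U)) := by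
  set W : ℕ → Submodule K A := fun n => span K ((u ^ ·) '' Set.Icc 1 n)
  have hW : Monotone W := fun _ _ h => span_mono (Set.image_mono (Set.Icc_subset_Icc_right h))
  have hWU (n : ℕ) : W n ≤ U := span_le.2 (by rintro _ ⟨i, ⟨hi, -⟩, rfl⟩; exact hu i hi)
  obtain ⟨n, hn, hstab⟩ := exists_succ_le_of_monotone hW hWU
  have hsucc : u ^ (n + 1) ∈ W n := hstab (subset_span ⟨n + 1, ⟨le_add_self, le_rfl⟩, rfl⟩)
  exact hW hn (pow_mem_span_pow_Icc_of_pow_succ_mem hsucc le_add_self)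

/-- If `dim_k P_{≥1}(a_1,…,a_m) < ∞`, then the subspace `k a_1 + … + k a_m` is algebraic
of bounded degree: there exists `d ≥ 1` such that every element of `k a_1 + … + k a_m`
is algebraic of degree at most `d`. -/
theorem algebraic_bounded_of_finiteDimensional_Pge
    (k : Type*) [Field k] (A : Type*) [Ring A] [Algebra k A]
    (m : ℕ) (a : Fin m → A)
    (h : FiniteDimensional k ↥(⨆ n ∈ Set.Ici 1, Pdeg k a n)) :
    ∃ d : ℕ, 1 ≤ d ∧ ∀ u ∈ Submodule.span k (Set.range a),
      u ^ d ∈ Submodule.span k ((fun i : ℕ => u ^ i) '' Set.Icc 1 (d - 1)) := by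
  refine ⟨finrank k ↥(⨆ n ∈ Set.Ici 1, Pdeg k a n) + 1, le_add_self, fun u hu => ?_⟩
  obtain ⟨c, rfl⟩ := (mem_span_range_iff_exists_fun k).1 hu
  rw [Nat.add_sub_cancel]
  exact pow_finrank_succ_mem_span_pow_Icc fun n hn =>
    le_iSup₂ (f := fun n _ => Pdeg k a n) n hn (pow_sum_smul_mem_Pdeg c a n)
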